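/- arXiv:2402.13680 — 2 statements merged into one kernel-verified Lean document; each statement's English description precedes it below -/
import Mathlib

section
/- (First-order expansion at a Lebesgue point under needle variation.) Let $E$ be a Banach space, $T > 0$, $\tau \in (0,T]$, and $a, b : [0,T] \to E$ Bochner integrable with $\tau$ a Lebesgue point of both $a$ and $b$. Let $c_\varepsilon(\tau) = c(\tau - \varepsilon) + \int_{\tau-\varepsilon}^{\tau} a_\varepsilon(s)\,ds$ and $c(\tau) = c(\tau-\varepsilon) + \int_{\tau-\varepsilon}^\tau b(s)\,ds$, where $\|a_\varepsilon(s) - a(s)\| \le L \sup_{[0,T]}\|c_\varepsilon - c\|$ for $s \in [\tau - \varepsilon, \tau]$ and $\sup_{[0,T]}\|c_\varepsilon - c\| \to 0$ as $\varepsilon \to 0^+$. Then $\lim_{\varepsilon \to 0^+} \frac{c_\varepsilon(\tau) - c(\tau)}{\varepsilon} = a(\tau) - b(\tau)$. -/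
open Set Filter Topology MeasureTheory

/-- First-order expansion at a Lebesgue point under needle variation: the blow-up
`(c_ε(τ) - c(τ))/ε` of the trajectory difference at the end of the needle interval
converges to `a(τ) - b(τ)` as `ε → 0⁺`. -/
theorem needle_blowup_at_lebesgue_point
    {E : Type*} [NormedAddCommGroup E] [NormedSpace ℝ E] [CompleteSpace E]
    (T τ L : ℝ) (hT : 0 < T) (hτ : τ ∈ Ioc 0 T) (hL : 0 < L)
    (a b : ℝ → E)
    (ha : IntervalIntegrable a MeasureTheory.volume 0 T)
    (hb : IntervalIntegrable b MeasureTheory.volume 0 T)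
    (haLeb : Tendsto (fun ε : ℝ => ε⁻¹ * ∫ s in (τ - ε)..τ, ‖a s - a τ‖)
      (𝓝[>] 0) (𝓝 0))
    (hbLeb : Tendsto (fun ε : ℝ => ε⁻¹ * ∫ s in (τ - ε)..τ, ‖b s - b τ‖)
      (𝓝[>] 0) (𝓝 0))
    (c : ℝ → E) (cε : ℝ → ℝ → E) (aε : ℝ → ℝ → E)
    (haε : ∀ ε > (0:ℝ), IntervalIntegrable (aε ε) MeasureTheory.volume (τ - ε) τ)
    (heqε : ∀ ε > (0:ℝ), cε ε τ = c (τ - ε) + ∫ s in (τ - ε)..τ, aε ε s)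
    (heq : ∀ ε > (0:ℝ), c τ = c (τ - ε) + ∫ s in (τ - ε)..τ, b s)
    (D : ℝ → ℝ) (hD0 : Tendsto D (𝓝[>] 0) (𝓝 0)) (hDnn : ∀ ε, 0 ≤ D ε)
    (hDsup : ∀ ε > (0:ℝ), ∀ t ∈ Icc (0:ℝ) T, ‖cε ε t - c t‖ ≤ D ε)
    (haεa : ∀ ε > (0:ℝ), ∀ s ∈ Icc (τ - ε) τ, ‖aε ε s - a s‖ ≤ L * D ε) :
    Tendsto (fun ε : ℝ => ε⁻¹ • (cε ε τ - c τ)) (𝓝[>] 0) (𝓝 (a τ - b τ)) := by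

  rw [← tendsto_sub_nhds_zero_iff]
  have hbound : ∀ᶠ ε in 𝓝[>] (0:ℝ),
      ‖ε⁻¹ • (cε ε τ - c τ) - (a τ - b τ)‖ ≤
        L * D ε + ε⁻¹ * (∫ s in (τ - ε)..τ, ‖a s - a τ‖)
          + ε⁻¹ * (∫ s in (τ - ε)..τ, ‖b s - b τ‖) := by
    filter_upwards [self_mem_nhdsWithin, Ioo_mem_nhdsGT_of_mem ⟨le_refl (0:ℝ), hτ.1⟩]
      with ε hε hε'
    have hε0 : (0:ℝ) < ε := hε
    have hεa : ε < τ := hε'.2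
    have hsub : Set.uIcc (τ - ε) τ ⊆ Set.uIcc 0 T := by
      rw [Set.uIcc_of_le (by linarith), Set.uIcc_of_le hT.le]
      exact Set.Icc_subset_Icc (by linarith [hτ.1]) hτ.2
    have hia : IntervalIntegrable a volume (τ - ε) τ := ha.mono_set hsub
    have hib : IntervalIntegrable b volume (τ - ε) τ := hb.mono_set hsub
    have hiaε := haε ε hε0
    have hcc : cε ε τ - c τ = (∫ s in (τ - ε)..τ, aε ε s) - ∫ s in (τ - ε)..τ, b s := by
      rw [heqε ε hε0, heq ε hε0]; abel
    have hdecomp : ε⁻¹ • (cε ε τ - c τ) - (a τ - b τ)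
        = ε⁻¹ • ((∫ s in (τ - ε)..τ, aε ε s - a s)
          + (∫ s in (τ - ε)..τ, a s - a τ) - (∫ s in (τ - ε)..τ, b s - b τ)) := by
      rw [hcc, intervalIntegral.integral_sub hiaε hia,
        intervalIntegral.integral_sub hia (intervalIntegrable_const),
        intervalIntegral.integral_sub hib (intervalIntegrable_const),
        intervalIntegral.integral_const]
      have h : τ - (τ - ε) = ε := by ring
      simp only [intervalIntegral.integral_const, h, smul_sub, smul_add, smul_smul,
        inv_mul_cancel₀ (ne_of_gt hε0), one_smul]
      abel
    rw [hdecomp]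
    have h1 : ‖∫ s in (τ - ε)..τ, aε ε s - a s‖ ≤ L * D ε * ε := by
      have := intervalIntegral.norm_integral_le_of_norm_le_const
        (C := L * D ε) (f := fun s => aε ε s - a s) (a := τ - ε) (b := τ) ?_
      · have habs : |τ - (τ - ε)| = ε := by rw [abs_of_nonneg (by linarith)]; ring
        rw [habs] at this; linarith
      · intro x hx
        rw [Set.uIoc_of_le (by linarith)] at hx
        exact haεa ε hε0 x ⟨hx.1.le, hx.2⟩
    have h2 : ‖∫ s in (τ - ε)..τ, a s - a τ‖ ≤ ∫ s in (τ - ε)..τ, ‖a s - a τ‖ :=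
      intervalIntegral.norm_integral_le_integral_norm (by linarith)
    have h3 : ‖∫ s in (τ - ε)..τ, b s - b τ‖ ≤ ∫ s in (τ - ε)..τ, ‖b s - b τ‖ :=
      intervalIntegral.norm_integral_le_integral_norm (by linarith)
    calc ‖ε⁻¹ • ((∫ s in (τ - ε)..τ, aε ε s - a s)
          + (∫ s in (τ - ε)..τ, a s - a τ) - (∫ s in (τ - ε)..τ, b s - b τ))‖
        ≤ ε⁻¹ * (‖∫ s in (τ - ε)..τ, aε ε s - a s‖
          + ‖∫ s in (τ - ε)..τ, a s - a τ‖ + ‖∫ s in (τ - ε)..τ, b s - b τ‖) := by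
          rw [norm_smul, Real.norm_eq_abs, abs_of_pos (inv_pos.mpr hε0)]
          exact mul_le_mul_of_nonneg_left
            ((norm_sub_le _ _).trans (by gcongr; exact norm_add_le _ _))
            (inv_nonneg.mpr hε0.le)
      _ ≤ ε⁻¹ * (L * D ε * ε + (∫ s in (τ - ε)..τ, ‖a s - a τ‖)
            + (∫ s in (τ - ε)..τ, ‖b s - b τ‖)) := by
          have hεinv : (0:ℝ) ≤ ε⁻¹ := inv_nonneg.mpr hε0.le
          gcongr
      _ = L * D ε + ε⁻¹ * (∫ s in (τ - ε)..τ, ‖a s - a τ‖)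
            + ε⁻¹ * (∫ s in (τ - ε)..τ, ‖b s - b τ‖) := by
          have : ε⁻¹ * (L * D ε * ε) = L * D ε := by field_simp
          rw [mul_add, mul_add, this]
  have hglim : Tendsto (fun ε : ℝ => L * D ε + ε⁻¹ * (∫ s in (τ - ε)..τ, ‖a s - a τ‖)
      + ε⁻¹ * (∫ s in (τ - ε)..τ, ‖b s - b τ‖)) (𝓝[>] 0) (𝓝 0) := by
    have : Tendsto (fun ε : ℝ => L * D ε) (𝓝[>] 0) (𝓝 (L * 0)) := hD0.const_mul L
    rw [mul_zero] at this
    simpa using (this.add haLeb).add hbLeb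
  exact squeeze_zero_norm' hbound hglim
end

section
/- (Local differentiability of the velocity field implies uniform Lipschitz bound on the Wasserstein gradient.) Let $Y$ be a separable Banach space, $X \subseteq Y$ closed and convex, $W = \overline{\mathbb{R}(X - X)}$, and let $\phi : \mathcal{P}_1(X) \to W$ be $W_1$-Lipschitz with constant $L$ on compactly supported measures and locally differentiable at $\mu \in \mathcal{P}_c(X)$ in the sense that there is $\nabla_\mu\phi(\mu) \in L^2_\mu(X; \mathcal{L}(W; W))$ with $\phi(\nu) - \phi(\mu) = \int \nabla_\mu\phi(\mu)(x_1)[x_2 - x_1]\,d\gamma(x_1,x_2) + o(W_{2,\gamma}(\mu,\nu))$ for all $\nu$ supported in a bounded fattening of $\mathrm{supp}(\mu)$ and all $\gamma \in \Gamma(\mu,\nu)$. If moreover $x \mapsto \nabla_\mu\phi(\mu)(x)$ is continuous, then $\|\nabla_\mu\phi(\mu)(x_0)\|_{\mathcal{L}(W;W)} \le L$ for every $x_0 \in \mathrm{supp}(\mu)$. -/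
open Set MeasureTheory

section WassersteinDefs

variable {Y : Type*} [NormedAddCommGroup Y] [NormedSpace ℝ Y] [MeasurableSpace Y]
  [TopologicalSpace.SeparableSpace Y] [BorelSpace Y]

/-- The support of a measure: points all of whose neighbourhoods have positive measure. -/
def measSupport (μ : Measure Y) : Set Y := {x | ∀ U ∈ nhds x, 0 < μ U}

/-- The quantity `W_{2,γ}(μ,ν) = (∫ ‖x₁ - x₂‖² dγ)^{1/2}` associated to a coupling `γ`. -/
noncomputable def W2coupling (γ : Measure (Y × Y)) : ℝ :=
  Real.sqrt (∫ p, ‖p.1 - p.2‖ ^ 2 ∂γ)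

/-- The 1-Wasserstein distance, as the infimum of transport costs over couplings. -/
noncomputable def Wass1 (μ ν : Measure Y) : ℝ :=
  sInf {r | ∃ γ : Measure (Y × Y), IsProbabilityMeasure γ ∧
    γ.map Prod.fst = μ ∧ γ.map Prod.snd = ν ∧ r = ∫ p, ‖p.1 - p.2‖ ∂γ}

/-- Local differentiability at `μ` (Definition 3.2 of the paper) of a functional
`φ` defined on probability measures on the convex set `X`, with gradient
`G ∈ L²_μ(X; 𝓛(E_C; Y))`: for every `R > 0`,
`φ(ν) - φ(μ) = ∫ G(x₁)[x₂ - x₁] dγ(x₁,x₂) + o_R(W_{2,γ}(μ,ν))` for all `ν`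
supported in the `R`-fattening of `supp μ` (inside `X`) and all couplings `γ`. -/
def LocallyDiffAt (X : Set Y) (φ : Measure Y → Y) (μ : Measure Y)
    (G : Y → (Y →L[ℝ] Y)) : Prop :=
  ∀ R > (0:ℝ), ∀ ε > (0:ℝ), ∃ δ > (0:ℝ), ∀ ν : Measure Y, IsProbabilityMeasure ν →
    ν Xᶜ = 0 → ν {x | ∀ y ∈ measSupport μ, R < dist x y} = 0 →
    ∀ γ : Measure (Y × Y), IsProbabilityMeasure γ →
      γ.map Prod.fst = μ → γ.map Prod.snd = ν → W2coupling γ < δ →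
      ‖φ ν - φ μ - ∫ p, G p.1 (p.2 - p.1) ∂γ‖ ≤ ε * W2coupling γ

end WassersteinDefs

section Aux

set_option linter.unusedSectionVars false

variable {Y : Type*} [NormedAddCommGroup Y] [NormedSpace ℝ Y] [MeasurableSpace Y]
  [TopologicalSpace.SeparableSpace Y] [BorelSpace Y]

lemma isClosed_measSupport (μ : Measure Y) : IsClosed (measSupport μ) := by
  rw [← isOpen_compl_iff, isOpen_iff_mem_nhds]
  intro x hx
  simp only [measSupport, mem_compl_iff, mem_setOf_eq, not_forall] at hx
  obtain ⟨U, hU, hUpos⟩ := hx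
  have hU0 : μ U = 0 := by simpa using hUpos
  have : interior U ⊆ (measSupport μ)ᶜ := by
    intro y hy h
    have := h (interior U) (isOpen_interior.mem_nhds hy)
    exact absurd (measure_mono_null interior_subset hU0) (by simpa using this.ne')
  exact Filter.mem_of_superset (isOpen_interior.mem_nhds (mem_interior_iff_mem_nhds.2 hU)) this

lemma measSupport_compl_null (μ : Measure Y) : μ (measSupport μ)ᶜ = 0 := by
  haveI := UniformSpace.secondCountable_of_separable Y
  set S : Set (Set Y) := {U | IsOpen U ∧ μ U = 0} with hS
  obtain ⟨T, hTc, hTS, hTU⟩ := TopologicalSpace.isOpen_sUnion_countable S (fun U hU => hU.1)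
  have hsub : (measSupport μ)ᶜ ⊆ ⋃₀ S := by
    intro x hx
    simp only [measSupport, mem_compl_iff, mem_setOf_eq, not_forall] at hx
    obtain ⟨U, hU, hUpos⟩ := hx
    have hU0 : μ U = 0 := by simpa using hUpos
    exact ⟨interior U, ⟨isOpen_interior, measure_mono_null interior_subset hU0⟩,
      mem_interior_iff_mem_nhds.2 hU⟩
  refine measure_mono_null (hsub.trans hTU.symm.subset) ?_
  exact (measure_sUnion_null_iff hTc).2 fun s hs => (hTS hs).2

lemma integrable_of_cont_bdd [SecondCountableTopology Y] {E : Type*} [NormedAddCommGroup E]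
    {μ : Measure Y} [IsFiniteMeasure μ] {g : Y → E} (hg : Continuous g) (C : ℝ)
    (hC : ∀ x, ‖g x‖ ≤ C) : Integrable g μ :=
  (integrable_const C).mono' hg.aestronglyMeasurable (ae_of_all _ hC)

end Aux

set_option maxHeartbeats 2000000 in
/-- If `φ` is `W₁`-Lipschitz with constant `L` on compactly supported probability measures
on `X` and locally differentiable at `μ ∈ 𝒫_c(X)` with continuous gradient `∇_μφ(μ)`,
then `‖∇_μφ(μ)(x₀)[c₂ - c₁]‖ ≤ L ‖c₂ - c₁‖` for every `x₀ ∈ supp μ` and `c₁, c₂ ∈ X`;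
i.e. the gradient has operator norm at most `L` on `E_C = span(X - X)`. -/
theorem wasserstein_gradient_bound
    {Y : Type*} [NormedAddCommGroup Y] [NormedSpace ℝ Y] [CompleteSpace Y]
    [MeasurableSpace Y] [TopologicalSpace.SeparableSpace Y] [BorelSpace Y]
    (X : Set Y) (hXc : IsClosed X) (hXconv : Convex ℝ X)
    (L : ℝ) (hL : 0 ≤ L)
    (φ : Measure Y → Y)
    (hLip : ∀ μ₁ μ₂ : Measure Y, IsProbabilityMeasure μ₁ → IsProbabilityMeasure μ₂ →
      μ₁ Xᶜ = 0 → μ₂ Xᶜ = 0 → IsCompact (measSupport μ₁) → IsCompact (measSupport μ₂) →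
      ‖φ μ₁ - φ μ₂‖ ≤ L * Wass1 μ₁ μ₂)
    (μ : Measure Y) [IsProbabilityMeasure μ] (hμX : μ Xᶜ = 0)
    (hμK : IsCompact (measSupport μ))
    (G : Y → (Y →L[ℝ] Y)) (hG2 : MemLp G 2 μ) (hGcont : Continuous G)
    (hdiff : LocallyDiffAt X φ μ G) :
    ∀ x₀ ∈ measSupport μ, ∀ c₁ ∈ X, ∀ c₂ ∈ X,
      ‖G x₀ (c₂ - c₁)‖ ≤ L * ‖c₂ - c₁‖ := by
  haveI : SecondCountableTopology Y := UniformSpace.secondCountable_of_separable Y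
  intro x₀ hx₀ c₁ hc₁ c₂ hc₂
  set v : Y := c₂ - c₁ with hv
  refine le_of_forall_pos_le_add (fun η hη => ?_)
  -- continuity of x ↦ G x v at x₀
  have hGv : Continuous fun x => G x v := hGcont.clm_apply continuous_const
  obtain ⟨d, hd0, hdball⟩ := Metric.continuous_iff.1 hGv x₀ (η/3) (by positivity)
  obtain ⟨ρ, hρ0, hρball⟩ := Metric.continuous_iff.1 hGcont x₀ 1 one_pos
  set r : ℝ := min (min (d/2) (ρ/2)) 1 with hrdef
  have hr0 : 0 < r := by positivity
  have hr1 : r ≤ 1 := min_le_right _ _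
  have hrd : r < d := lt_of_le_of_lt ((min_le_left _ _).trans (min_le_left _ _)) (by linarith)
  have hrρ : r < ρ := lt_of_le_of_lt ((min_le_left _ _).trans (min_le_right _ _)) (by linarith)
  have hrG : ∀ x, dist x x₀ < r → ‖G x v - G x₀ v‖ ≤ η/3 := fun x hx =>
    le_of_lt (by rw [← dist_eq_norm]; exact hdball x (hx.trans hrd))
  set M : ℝ := ‖G x₀‖ + 1 with hMdef
  have hM0 : 0 < M := by positivity
  have hMb : ∀ x, dist x x₀ < r → ‖G x‖ ≤ M := by
    intro x hx
    have := hρball x (hx.trans hrρ)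
    rw [dist_eq_norm] at this
    have h2 : ‖G x‖ - ‖G x₀‖ ≤ ‖G x - G x₀‖ := norm_sub_norm_le _ _
    rw [hMdef]; linarith
  -- the bump function
  set f : Y → ℝ := fun x => max 0 (1 - dist x x₀ / r) with hfdef
  have hf0 : ∀ x, 0 ≤ f x := fun x => le_max_left _ _
  have hf1 : ∀ x, f x ≤ 1 := by
    intro x
    refine max_le (by norm_num) ?_
    have : 0 ≤ dist x x₀ / r := by positivity
    linarith
  have hfc : Continuous f :=
    continuous_const.max (continuous_const.sub ((continuous_id.dist continuous_const).div_const r))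
  have hfs : ∀ x, f x ≠ 0 → dist x x₀ < r := by
    intro x hx
    by_contra h
    push_neg at h
    have : 1 - dist x x₀ / r ≤ 0 := by
      have : 1 ≤ dist x x₀ / r := (one_le_div hr0).2 h
      linarith
    exact hx (max_eq_left this)
  have hfint : Integrable f μ := integrable_of_cont_bdd hfc 1
    (fun x => by rw [Real.norm_of_nonneg (hf0 x)]; exact hf1 x)
  set m : ℝ := ∫ x, f x ∂μ with hmdef
  have hm0 : 0 < m := by
    have hball : 0 < μ (Metric.ball x₀ (r/2)) :=
      hx₀ _ (Metric.ball_mem_nhds _ (by positivity))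
    have hfhalf : ∀ x ∈ Metric.ball x₀ (r/2), (1/2 : ℝ) ≤ f x := by
      intro x hx
      rw [Metric.mem_ball] at hx
      refine le_max_of_le_right ?_
      have : dist x x₀ / r ≤ 1/2 := by
        rw [div_le_iff₀ hr0]
        nlinarith [dist_nonneg (x := x) (y := x₀)]
      linarith
    have h1 : (1/2 : ℝ) * (μ (Metric.ball x₀ (r/2))).toReal ≤ ∫ x in Metric.ball x₀ (r/2), f x ∂μ :=
      setIntegral_ge_of_const_le_real measurableSet_ball (measure_ne_top μ _) hfhalf hfint.integrableOn
    have h2 : ∫ x in Metric.ball x₀ (r/2), f x ∂μ ≤ m :=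
      setIntegral_le_integral hfint (ae_of_all _ hf0)
    have h3 : 0 < (μ (Metric.ball x₀ (r/2))).toReal :=
      ENNReal.toReal_pos hball.ne' (measure_ne_top μ _)
    linarith
  -- constants
  set C₀ : ℝ := ‖c₁ - x₀‖ + ‖c₂ - x₀‖ + 1 with hC₀def
  have hC₀ : 0 < C₀ := by positivity
  have hCb : ∀ c : Y, ‖c - x₀‖ + 1 ≤ C₀ → ∀ x, f x ≠ 0 → ‖c - x‖ ≤ C₀ := by
    intro c hc x hx
    have hxr := hfs x hx
    have : ‖c - x‖ ≤ ‖c - x₀‖ + ‖x₀ - x‖ := norm_sub_le_norm_sub_add_norm_sub c x₀ x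
    have h2 : ‖x₀ - x‖ = dist x x₀ := by rw [← dist_eq_norm, dist_comm]
    have : ‖c - x‖ ≤ ‖c - x₀‖ + dist x x₀ := by rw [← h2]; exact this
    nlinarith
  have hc₁C : ‖c₁ - x₀‖ + 1 ≤ C₀ := by rw [hC₀def]; nlinarith [norm_nonneg (c₂ - x₀)]
  have hc₂C : ‖c₂ - x₀‖ + 1 ≤ C₀ := by rw [hC₀def]; nlinarith [norm_nonneg (c₁ - x₀)]
  set R : ℝ := C₀ + 2 with hRdef
  have hR : 0 < R := by positivity
  -- ε and δ
  have hsqm : 0 < Real.sqrt m := Real.sqrt_pos.2 hm0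
  set ε : ℝ := η * Real.sqrt m / (6 * C₀) with hεdef
  have hε : 0 < ε := by positivity
  obtain ⟨δ, hδ0, hδ⟩ := hdiff R hR ε hε
  set s : ℝ := C₀ * Real.sqrt m with hsdef
  have hs0 : 0 < s := by positivity
  set t : ℝ := min 1 (δ / (2 * s)) with htdef
  have ht0 : 0 < t := lt_min one_pos (by positivity)
  have ht1 : t ≤ 1 := min_le_left _ _
  have hts : t * s < δ := by
    have : t ≤ δ / (2 * s) := min_le_right _ _
    have h2 : t * s ≤ δ / (2 * s) * s := mul_le_mul_of_nonneg_right this hs0.le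
    have h3 : δ / (2 * s) * s = δ / 2 := by field_simp
    nlinarith
  -- the maps
  set Tmap : Y → Y → Y := fun c x => x + (t * f x) • (c - x) with hTdef
  have hTcont : ∀ c, Continuous (Tmap c) :=
    fun c => continuous_id.add (((continuous_const.mul hfc).smul
      (continuous_const.sub continuous_id)))
  have hTmeas : ∀ c, Measurable (Tmap c) := fun c => (hTcont c).measurable
  have hTsub : ∀ c x, Tmap c x - x = (t * f x) • (c - x) := by
    intro c x; simp [hTdef]
  have htf01 : ∀ x, t * f x ∈ Icc (0:ℝ) 1 :=
    fun x => ⟨by positivity, mul_le_one₀ ht1 (hf0 x) (hf1 x)⟩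
  have hTX : ∀ c ∈ X, ∀ x ∈ X, Tmap c x ∈ X :=
    fun c hc x hx => hXconv.add_smul_sub_mem hx hc (htf01 x)
  have hTid : ∀ c x, f x = 0 → Tmap c x = x := by intro c x h; simp [hTdef, h]
  have hTd : ∀ c x, dist (Tmap c x) x = (t * f x) * ‖c - x‖ := by
    intro c x
    rw [dist_eq_norm, show Tmap c x - x = (t * f x) • (c - x) from hTsub c x, norm_smul,
      Real.norm_of_nonneg (htf01 x).1]
  -- pushforward measures
  have hpairmeas : ∀ c : Y, Measurable fun x => (x, Tmap c x) :=
    fun c => measurable_id.prodMk (hTmeas c)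
  set ν : Y → Measure Y := fun c => μ.map (Tmap c) with hνdef
  set γm : Y → Measure (Y × Y) := fun c => μ.map (fun x => (x, Tmap c x)) with hγdef
  have hνprob : ∀ c, IsProbabilityMeasure (ν c) :=
    fun c => Measure.isProbabilityMeasure_map (hTmeas c).aemeasurable
  have hγprob : ∀ c, IsProbabilityMeasure (γm c) :=
    fun c => Measure.isProbabilityMeasure_map (hpairmeas c).aemeasurable
  have hγfst : ∀ c, (γm c).map Prod.fst = μ := by
    intro c
    rw [hγdef]
    simp only
    rw [Measure.map_map measurable_fst (hpairmeas c)]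
    exact Measure.map_id
  have hγsnd : ∀ c, (γm c).map Prod.snd = ν c := by
    intro c
    rw [hγdef, hνdef]
    simp only
    rw [Measure.map_map measurable_snd (hpairmeas c)]
    rfl
  have hνX : ∀ c ∈ X, (ν c) Xᶜ = 0 := by
    intro c hc
    rw [hνdef]
    simp only
    rw [Measure.map_apply (hTmeas c) hXc.measurableSet.compl]
    refine measure_mono_null (fun x hx => ?_) hμX
    intro hxX
    exact hx (hTX c hc x hxX)
  have himg : ∀ c, IsCompact (Tmap c '' measSupport μ) := fun c => hμK.image (hTcont c)
  have hout : ∀ c, (ν c) ((Tmap c '' measSupport μ)ᶜ) = 0 := by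
    intro c
    rw [hνdef]
    simp only
    rw [Measure.map_apply (hTmeas c) (himg c).isClosed.measurableSet.compl]
    refine measure_mono_null (fun x hx => ?_) (measSupport_compl_null μ)
    intro hxK
    exact hx (mem_image_of_mem _ hxK)
  have hνK : ∀ c, IsCompact (measSupport (ν c)) := by
    intro c
    refine (himg c).of_isClosed_subset (isClosed_measSupport _) ?_
    intro z hz
    by_contra hzn
    have := hz _ ((himg c).isClosed.isOpen_compl.mem_nhds hzn)
    rw [hout c] at this
    exact lt_irrefl _ this
  have hbad : ∀ c, ‖c - x₀‖ + 1 ≤ C₀ →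
      (ν c) {x | ∀ y ∈ measSupport μ, R < dist x y} = 0 := by
    intro c hcC
    refine measure_mono_null (fun z hz => ?_) (hout c)
    simp only [mem_setOf_eq] at hz
    rintro ⟨x, hxK, rfl⟩
    by_cases h : f x = 0
    · have h1 := hz x hxK
      rw [hTid c x h] at h1
      simp only [dist_self] at h1
      linarith
    · have h1 := hz x₀ hx₀
      have h2 : dist (Tmap c x) x₀ ≤ dist (Tmap c x) x + dist x x₀ := dist_triangle _ _ _
      have h3 : dist (Tmap c x) x ≤ C₀ := by
        rw [hTd c x]
        have h5 := hCb c hcC x h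
        nlinarith [(htf01 x).1, (htf01 x).2, norm_nonneg (c - x)]
      have h4 : dist x x₀ < r := hfs x h
      rw [hRdef] at h1
      linarith
  -- W2 estimates
  have hW2eq : ∀ c, W2coupling (γm c) = Real.sqrt (∫ x, ((t * f x) * ‖c - x‖)^2 ∂μ) := by
    intro c
    calc W2coupling (γm c) = Real.sqrt (∫ x, ‖x - Tmap c x‖^2 ∂μ) := by
          rw [W2coupling, hγdef]
          simp only
          congr 1
          rw [integral_map (f := fun p : Y × Y => ‖p.1 - p.2‖ ^ 2) (hpairmeas c).aemeasurable
            (Continuous.aestronglyMeasurable ((continuous_fst.sub continuous_snd).norm.pow 2))]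
      _ = _ := by
          refine congrArg Real.sqrt (integral_congr_ae (ae_of_all _ fun x => ?_))
          show ‖x - Tmap c x‖^2 = (t * f x * ‖c - x‖)^2
          rw [norm_sub_rev, ← dist_eq_norm, hTd]
  have hptsq : ∀ c, ‖c - x₀‖ + 1 ≤ C₀ → ∀ x, ((t * f x) * ‖c - x‖)^2 ≤ (t^2 * C₀^2) * f x := by
    intro c hcC x
    by_cases h : f x = 0
    · simp [h]
    · have h1 := hCb c hcC x h
      have h2 := hf0 x
      have h3 := hf1 x
      have h4 := norm_nonneg (c - x)
      have hb2 : ‖c - x‖^2 ≤ C₀^2 := by nlinarith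
      have ha2 : (f x)^2 ≤ f x := by nlinarith
      have key : (f x)^2 * ‖c - x‖^2 ≤ C₀^2 * f x := by
        nlinarith [mul_le_mul_of_nonneg_left hb2 (sq_nonneg (f x)),
          mul_le_mul_of_nonneg_left ha2 (sq_nonneg C₀)]
      nlinarith [mul_le_mul_of_nonneg_left key (sq_nonneg t)]
  have hsqint : ∀ c, ‖c - x₀‖ + 1 ≤ C₀ → Integrable (fun x => ((t * f x) * ‖c - x‖)^2) μ := by
    intro c hcC
    refine integrable_of_cont_bdd
      (((continuous_const.mul hfc).mul (continuous_const.sub continuous_id).norm).pow 2)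
      (t^2 * C₀^2) (fun x => ?_)
    rw [Real.norm_of_nonneg (sq_nonneg _)]
    calc ((t * f x) * ‖c - x‖)^2 ≤ (t^2 * C₀^2) * f x := hptsq c hcC x
      _ ≤ (t^2 * C₀^2) * 1 := mul_le_mul_of_nonneg_left (hf1 x) (by positivity)
      _ = t^2 * C₀^2 := mul_one _
  have hW2le : ∀ c, ‖c - x₀‖ + 1 ≤ C₀ → W2coupling (γm c) ≤ t * s := by
    intro c hcC
    rw [hW2eq c]
    have h1 : ∫ x, ((t * f x) * ‖c - x‖)^2 ∂μ ≤ (t^2 * C₀^2) * m := by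
      calc ∫ x, ((t * f x) * ‖c - x‖)^2 ∂μ ≤ ∫ x, (t^2 * C₀^2) * f x ∂μ :=
            integral_mono (hsqint c hcC) (hfint.const_mul _) (fun x => hptsq c hcC x)
        _ = (t^2 * C₀^2) * m := by rw [integral_const_mul]
    calc Real.sqrt (∫ x, ((t * f x) * ‖c - x‖)^2 ∂μ) ≤ Real.sqrt ((t^2*C₀^2)*m) :=
          Real.sqrt_le_sqrt h1
      _ = t * s := by
          rw [hsdef, show t^2*C₀^2*m = (t*C₀)^2 * m by ring, Real.sqrt_mul (sq_nonneg _),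
            Real.sqrt_sq (by positivity)]
          ring
  -- integrability of the localized gradient integrand
  have hAint : ∀ c, ‖c - x₀‖ + 1 ≤ C₀ → Integrable (fun x => f x • (G x) (c - x)) μ := by
    intro c hcC
    refine integrable_of_cont_bdd
      (hfc.smul (hGcont.clm_apply (continuous_const.sub continuous_id))) (M * C₀) (fun x => ?_)
    by_cases h : f x = 0
    · simp only [h, zero_smul, norm_zero]
      positivity
    · rw [norm_smul, Real.norm_of_nonneg (hf0 x)]
      have h1 := (G x).le_opNorm (c - x)
      have h2 := hMb x (hfs x h)
      have h3 := hCb c hcC x h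
      have h4 := hf1 x
      have h5 := hf0 x
      nlinarith [norm_nonneg ((G x) (c - x)), norm_nonneg (G x), norm_nonneg (c - x),
        mul_le_mul h2 h3 (norm_nonneg (c - x)) hM0.le]
  -- rewriting the coupling integral
  have hIeq : ∀ c, (∫ p, (G p.1) (p.2 - p.1) ∂(γm c)) = t • ∫ x, f x • (G x) (c - x) ∂μ := by
    intro c
    rw [hγdef]
    simp only
    rw [show (∫ p, (G p.1) (p.2 - p.1) ∂(μ.map (fun x => (x, Tmap c x))))
        = ∫ x, (G (x, Tmap c x).1) ((x, Tmap c x).2 - (x, Tmap c x).1) ∂μ from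
      integral_map (hpairmeas c).aemeasurable
        (Continuous.aestronglyMeasurable
          ((hGcont.comp continuous_fst).clm_apply (continuous_snd.sub continuous_fst)))]
    rw [← integral_smul]
    refine integral_congr_ae (ae_of_all _ fun x => ?_)
    show (G x) (Tmap c x - x) = t • f x • (G x) (c - x)
    rw [hTsub c x, (G x).map_smul, mul_smul]
  -- the differentiability estimate for the perturbed measure
  have hexp : ∀ c, c ∈ X → ‖c - x₀‖ + 1 ≤ C₀ →
      ‖φ (ν c) - φ μ - t • ∫ x, f x • (G x) (c - x) ∂μ‖ ≤ ε * (t * s) := by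
    intro c hc hcC
    have h := hδ (ν c) (hνprob c) (hνX c hc) (hbad c hcC) (γm c) (hγprob c)
      (hγfst c) (hγsnd c) ((hW2le c hcC).trans_lt hts)
    rw [hIeq c] at h
    exact h.trans (mul_le_mul_of_nonneg_left (hW2le c hcC) hε.le)
  -- bound on the Wasserstein-1 distance between the two perturbed measures
  have hTdiff : ∀ x, Tmap c₂ x - Tmap c₁ x = (t * f x) • v := by
    intro x
    rw [hTdef]
    simp only
    rw [show (x + (t * f x) • (c₂ - x)) - (x + (t * f x) • (c₁ - x))
        = (t * f x) • (c₂ - x) - (t * f x) • (c₁ - x) by abel, ← smul_sub,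
      show c₂ - x - (c₁ - x) = v by rw [hv]; abel]
  have hW1 : Wass1 (ν c₂) (ν c₁) ≤ t * (m * ‖v‖) := by
    set σ : Measure (Y × Y) := μ.map (fun x => (Tmap c₂ x, Tmap c₁ x)) with hσdef
    have hσmeas : Measurable fun x => (Tmap c₂ x, Tmap c₁ x) :=
      (hTmeas c₂).prodMk (hTmeas c₁)
    have hσfst : σ.map Prod.fst = ν c₂ := by
      rw [hσdef, hνdef]
      simp only
      rw [Measure.map_map measurable_fst hσmeas]
      rfl
    have hσsnd : σ.map Prod.snd = ν c₁ := by
      rw [hσdef, hνdef]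
      simp only
      rw [Measure.map_map measurable_snd hσmeas]
      rfl
    have hσprob : IsProbabilityMeasure σ := Measure.isProbabilityMeasure_map hσmeas.aemeasurable
    have hcost : (∫ p, ‖p.1 - p.2‖ ∂σ) = t * (m * ‖v‖) := by
      rw [hσdef]
      rw [integral_map (f := fun p : Y × Y => ‖p.1 - p.2‖) hσmeas.aemeasurable
        (Continuous.aestronglyMeasurable (continuous_fst.sub continuous_snd).norm)]
      have : (∫ x, ‖(Tmap c₂ x, Tmap c₁ x).1 - (Tmap c₂ x, Tmap c₁ x).2‖ ∂μ)
          = ∫ x, (t * ‖v‖) * f x ∂μ := by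
        refine integral_congr_ae (ae_of_all _ fun x => ?_)
        show ‖Tmap c₂ x - Tmap c₁ x‖ = (t * ‖v‖) * f x
        rw [hTdiff x, norm_smul, Real.norm_of_nonneg (htf01 x).1]
        ring
      rw [this, integral_const_mul]
      rw [← hmdef]
      ring
    have hbdd : BddBelow {r | ∃ γ' : Measure (Y × Y), IsProbabilityMeasure γ' ∧
        γ'.map Prod.fst = ν c₂ ∧ γ'.map Prod.snd = ν c₁ ∧ r = ∫ p, ‖p.1 - p.2‖ ∂γ'} := by
      refine ⟨0, fun r hr => ?_⟩
      obtain ⟨γ', -, -, -, rfl⟩ := hr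
      exact integral_nonneg fun p => norm_nonneg _
    have hmem : (t * (m * ‖v‖)) ∈ {r | ∃ γ' : Measure (Y × Y), IsProbabilityMeasure γ' ∧
        γ'.map Prod.fst = ν c₂ ∧ γ'.map Prod.snd = ν c₁ ∧ r = ∫ p, ‖p.1 - p.2‖ ∂γ'} :=
      ⟨σ, hσprob, hσfst, hσsnd, hcost.symm⟩
    exact csInf_le hbdd hmem
  -- assembling
  have hintv : Integrable (fun x => f x • (G x) v) μ := by
    refine integrable_of_cont_bdd (hfc.smul (hGcont.clm_apply continuous_const))
      (M * ‖v‖) (fun x => ?_)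
    by_cases h : f x = 0
    · simp only [h, zero_smul, norm_zero]
      positivity
    · rw [norm_smul, Real.norm_of_nonneg (hf0 x)]
      have h1 := (G x).le_opNorm v
      have h2 := hMb x (hfs x h)
      nlinarith [hf1 x, hf0 x, norm_nonneg ((G x) v), norm_nonneg v, norm_nonneg (G x),
        mul_le_mul_of_nonneg_right h2 (norm_nonneg v)]
  set A₁ : Y := ∫ x, f x • (G x) (c₁ - x) ∂μ with hA₁def
  set A₂ : Y := ∫ x, f x • (G x) (c₂ - x) ∂μ with hA₂def
  set J : Y := ∫ x, f x • (G x) v ∂μ with hJdef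
  have hJeq : A₂ - A₁ = J := by
    rw [hA₁def, hA₂def, hJdef, ← integral_sub (hAint c₂ hc₂C) (hAint c₁ hc₁C)]
    refine integral_congr_ae (ae_of_all _ fun x => ?_)
    show f x • (G x) (c₂ - x) - f x • (G x) (c₁ - x) = f x • (G x) v
    rw [← smul_sub, ← map_sub, show c₂ - x - (c₁ - x) = v by rw [hv]; abel]
  have hLipb : ‖φ (ν c₂) - φ (ν c₁)‖ ≤ L * (t * (m * ‖v‖)) := by
    have h := hLip (ν c₂) (ν c₁) (hνprob c₂) (hνprob c₁) (hνX c₂ hc₂) (hνX c₁ hc₁)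
      (hνK c₂) (hνK c₁)
    exact h.trans (mul_le_mul_of_nonneg_left hW1 hL)
  have hmm : Real.sqrt m * Real.sqrt m = m := Real.mul_self_sqrt hm0.le
  have hεts : ε * (t * s) = t * η * m / 6 := by
    clear_value ε s t m C₀
    rw [hεdef, hsdef]
    rw [show η * Real.sqrt m / (6 * C₀) * (t * (C₀ * Real.sqrt m))
        = t * η * (Real.sqrt m * Real.sqrt m) / 6 * (C₀ / C₀) by ring, hmm, div_self hC₀.ne']
    ring
  have hmain : t * ‖J‖ ≤ t * (L * (m * ‖v‖) + η * m / 3) := by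
    have e2 := hexp c₂ hc₂ hc₂C
    have e1 := hexp c₁ hc₁ hc₁C
    rw [hεts] at e1 e2
    have hsplit : t • J = (φ (ν c₂) - φ (ν c₁))
        - (φ (ν c₂) - φ μ - t • A₂) + (φ (ν c₁) - φ μ - t • A₁) := by
      rw [← hJeq, smul_sub]
      abel
    have hn1 : ‖t • J‖ ≤ ‖φ (ν c₂) - φ (ν c₁)‖ + ‖φ (ν c₂) - φ μ - t • A₂‖
        + ‖φ (ν c₁) - φ μ - t • A₁‖ := by
      rw [hsplit]
      calc ‖(φ (ν c₂) - φ (ν c₁)) - (φ (ν c₂) - φ μ - t • A₂) + (φ (ν c₁) - φ μ - t • A₁)‖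
          ≤ ‖(φ (ν c₂) - φ (ν c₁)) - (φ (ν c₂) - φ μ - t • A₂)‖
            + ‖φ (ν c₁) - φ μ - t • A₁‖ := norm_add_le _ _
        _ ≤ _ := by
            have := norm_sub_le (φ (ν c₂) - φ (ν c₁)) (φ (ν c₂) - φ μ - t • A₂)
            linarith
    have hn2 : ‖t • J‖ = t * ‖J‖ := by rw [norm_smul, Real.norm_of_nonneg ht0.le]
    rw [hn2] at hn1
    nlinarith
  have hJle : ‖J‖ ≤ L * (m * ‖v‖) + η * m / 3 := le_of_mul_le_mul_left hmain ht0
  have hJx : ‖J - m • (G x₀) v‖ ≤ m * (η / 3) := by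
    have heq : J - m • (G x₀) v = ∫ x, (f x • (G x) v - f x • (G x₀) v) ∂μ := by
      rw [integral_sub hintv (hfint.smul_const _), hJdef, hmdef, integral_smul_const]
    rw [heq]
    have hgint : Integrable (fun x => f x • ((η : ℝ) / 3)) μ := hfint.smul_const _
    refine le_trans (norm_integral_le_of_norm_le hgint (ae_of_all _ (fun x => ?_))) ?_
    · show ‖f x • (G x) v - f x • (G x₀) v‖ ≤ f x • ((η : ℝ) / 3)
      rw [← smul_sub, norm_smul, Real.norm_of_nonneg (hf0 x), smul_eq_mul]
      by_cases h : f x = 0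
      · simp [h]
      · exact mul_le_mul_of_nonneg_left (hrG x (hfs x h)) (hf0 x)
    · rw [integral_smul_const, ← hmdef, smul_eq_mul]
  have hfin : m * ‖(G x₀) v‖ ≤ m * (L * ‖v‖ + η) := by
    have h2 : ‖m • (G x₀) v‖ = m * ‖(G x₀) v‖ := by
      rw [norm_smul, Real.norm_of_nonneg hm0.le]
    have h3 : ‖m • (G x₀) v‖ ≤ ‖J‖ + ‖J - m • (G x₀) v‖ := by
      have h4 := norm_sub_le J (m • (G x₀) v)
      have h5 := norm_sub_norm_le (m • (G x₀) v) J
      have h6 : ‖m • (G x₀) v - J‖ = ‖J - m • (G x₀) v‖ := norm_sub_rev _ _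
      linarith
    nlinarith
  have hconc := le_of_mul_le_mul_left hfin hm0
  linarith
end
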